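/- arXiv:1610.04784 — 6 statements merged into one kernel-verified Lean document; each statement's English description precedes it below -/
import Mathlib

section
/- Let (R, m) be a commutative Noetherian local ring and let I be a proper ideal with depth(R/I) ≥ 1. Then I is weakly m-full. -/
open IsLocalRing

/-- A proper ideal `I` of a commutative Noetherian local ring `(R, m)` with
`depth(R/I) ≥ 1` (i.e. some element of `m` is a nonzerodivisor on `R/I`) is weakly
`m`-full, i.e. `(mI : m) = I`. -/
theorem stmt2 (R : Type*) [CommRing R] [IsNoetherianRing R] [IsLocalRing R]
    (I : Ideal R) (hI : I ≠ ⊤)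
    (hdepth : ∃ a ∈ maximalIdeal R, IsSMulRegular (R ⧸ I) a) :
    Submodule.colon (maximalIdeal R * I) (maximalIdeal R) = I := by
  obtain ⟨a, haM, hreg⟩ := hdepth
  apply le_antisymm
  · intro x hx
    have h1 : x • a ∈ maximalIdeal R * I := Submodule.mem_colon.mp hx a haM
    have h2 : a * x ∈ I := Ideal.mul_le_left (by simpa [smul_eq_mul, mul_comm] using h1)
    have h3 : a • (Ideal.Quotient.mk I x) = a • (0 : R ⧸ I) := by
      rw [smul_zero]
      have : (Ideal.Quotient.mk I) (a * x) = 0 := (Ideal.Quotient.eq_zero_iff_mem).mpr h2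
      simpa [Algebra.smul_def, Ideal.Quotient.algebraMap_eq] using this
    have := hreg h3
    exact (Ideal.Quotient.eq_zero_iff_mem).mp this
  · intro x hx
    rw [Submodule.mem_colon]
    intro p hp
    simpa [smul_eq_mul, mul_comm] using Submodule.mul_mem_mul hp hx
end

section
/- Let (R, m) be a commutative Noetherian local ring and let I be a nonzero proper ideal of R that is weakly m-full and satisfies depth(R/I) = 0. Then m(I : m) ≠ mI. -/
open IsLocalRing

namespace Ideal

variable {R : Type*} [CommSemiring R]

theorem le_colon_mul (I J : Ideal R) : I ≤ (J * I).colon J := fun x hx ↦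
  Submodule.mem_colon.2 fun p hp ↦ by
    rw [smul_eq_mul, mul_comm x p]
    exact mul_mem_mul hp hx

theorem colon_eq_self_of_mul_colon_eq_mul {I J : Ideal R} (hI : (J * I).colon J = I)
    (hJ : J * I.colon J = J * I) : I.colon J = I :=
  le_antisymm (by simpa only [hJ, hI] using le_colon_mul (I.colon J) J) le_colon

end Ideal

theorem stmt3_general (R : Type*) [CommRing R] [IsLocalRing R]
    (I : Ideal R)
    (hwmf : Submodule.colon (maximalIdeal R * I) (maximalIdeal R) = I)
    (hdepth : Submodule.colon I (maximalIdeal R) ≠ I) :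
    maximalIdeal R * Submodule.colon I (maximalIdeal R) ≠ maximalIdeal R * I :=
  fun h ↦ hdepth (Ideal.colon_eq_self_of_mul_colon_eq_mul hwmf h)

/-- If `I` is a nonzero proper weakly `m`-full ideal of a commutative Noetherian local
ring `(R, m)` with `depth(R/I) = 0` (equivalently `(I : m) ≠ I`), then
`m(I : m) ≠ mI`. -/
theorem stmt3 (R : Type*) [CommRing R] [IsNoetherianRing R] [IsLocalRing R]
    (I : Ideal R) (hI0 : I ≠ ⊥) (hI : I ≠ ⊤)
    (hwmf : Submodule.colon (maximalIdeal R * I) (maximalIdeal R) = I)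
    (hdepth : Submodule.colon I (maximalIdeal R) ≠ I) :
    maximalIdeal R * Submodule.colon I (maximalIdeal R) ≠ maximalIdeal R * I :=
  stmt3_general R I hwmf hdepth
end

section
/- Let R be a commutative Noetherian local ring, M a nonzero finitely generated R-module, and I a nonzero weakly m-full ideal of R with depth(R/I) = 0. If Ext_R^n(M, I) = Ext_R^{n+1}(M, I) = 0 for some n ≥ 1, then pd_R(M) < n. -/
open CategoryTheory IsLocalRing

noncomputable section

universe u

variable (R : Type u) [CommRing R]

/-- `Ext_R^n(M, N)` vanishes. -/
def extVanish (n : ℕ) (M N : ModuleCat.{u} R) : Prop :=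
  Subsingleton (((Ext R (ModuleCat.{u} R) n).obj (Opposite.op M)).obj N)

/-- `Tor_n^R(M, N)` vanishes. -/
def torVanish (n : ℕ) (M N : ModuleCat.{u} R) : Prop :=
  Subsingleton (((Tor (ModuleCat.{u} R) n).obj M).obj N)

/-- The projective dimension of `M` is at most `n`, characterized by vanishing of
`Ext^i(M, -)` for all `i > n`. -/
def pdLE (M : ModuleCat.{u} R) (n : ℕ) : Prop :=
  ∀ (N : ModuleCat.{u} R) (i : ℕ), n < i → extVanish R i M N

/-- The injective dimension of `N` is at most `n`, characterized by vanishing of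
`Ext^i(-, N)` for all `i > n`. -/
def idLE (N : ModuleCat.{u} R) (n : ℕ) : Prop :=
  ∀ (M : ModuleCat.{u} R) (i : ℕ), n < i → extVanish R i M N

/-- The injective dimension of `N` is finite. -/
def idFinite (N : ModuleCat.{u} R) : Prop :=
  ∃ n : ℕ, idLE R N n

/-- `N` is 2-Tor-rigid: vanishing of two consecutive Tor's against any finitely generated
module forces vanishing of all the subsequent ones. -/
def twoTorRigid (N : ModuleCat.{u} R) : Prop :=
  ∀ (M : ModuleCat.{u} R), Module.Finite R M → ∀ n : ℕ,
    torVanish R n M N → torVanish R (n + 1) M N → ∀ i : ℕ, n ≤ i → torVanish R i M N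

variable [IsLocalRing R]

/-- A local ring is regular if its maximal ideal is generated by a regular sequence. -/
def isRegularLocal : Prop :=
  ∃ rs : List R, RingTheory.Sequence.IsRegular R rs ∧
    Ideal.span {x | x ∈ rs} = maximalIdeal R

/-- `S` is a first syzygy `Ω M` of `M`: the kernel of a minimal free cover of `M`. -/
def isSyzygyOf (S M : ModuleCat.{u} R) : Prop :=
  ∃ (d : ℕ) (f : (Fin d → R) →ₗ[R] M), Function.Surjective f ∧
    LinearMap.ker f ≤ (maximalIdeal R) • (⊤ : Submodule R (Fin d → R)) ∧
    Nonempty (S ≃ₗ[R] LinearMap.ker f)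

/-- `S` is an `n`-th syzygy `Ω^n M` of `M`. -/
def isNthSyzygyOf : ℕ → ModuleCat.{u} R → ModuleCat.{u} R → Prop
  | 0, S, M => Nonempty (S ≃ₗ[R] M)
  | n + 1, S, M => ∃ T : ModuleCat.{u} R, isSyzygyOf R T M ∧ isNthSyzygyOf n S T

/-- `T` is an Auslander transpose `Tr M` of `M`: the cokernel of the dual of the map in a
minimal free presentation of `M`. -/
def isTransposeOf (T M : ModuleCat.{u} R) : Prop :=
  ∃ (a b : ℕ) (p : (Fin a → R) →ₗ[R] M) (q : (Fin b → R) →ₗ[R] (Fin a → R)),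
    Function.Surjective p ∧
    LinearMap.ker p ≤ (maximalIdeal R) • (⊤ : Submodule R (Fin a → R)) ∧
    LinearMap.range q = LinearMap.ker p ∧
    LinearMap.ker q ≤ (maximalIdeal R) • (⊤ : Submodule R (Fin b → R)) ∧
    Nonempty (T ≃ₗ[R] (Module.Dual R (Fin b → R) ⧸ LinearMap.range q.dualMap))


section Aux

variable {R : Type u} [CommRing R] [IsLocalRing R]

omit [IsLocalRing R] in
lemma pi_mem_smul_top {d : ℕ} (J : Ideal R) (w : Fin d → R) (hw : ∀ i, w i ∈ J) :
    w ∈ J • (⊤ : Submodule R (Fin d → R)) := by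
  rw [pi_eq_sum_univ w]
  exact Submodule.sum_mem _ fun i _ => Submodule.smul_mem_smul (hw i) trivial



structure MinCover (N : ModuleCat.{u} R) where
  d : ℕ
  f : (Fin d → R) →ₗ[R] N
  surj : Function.Surjective f
  ker_le : LinearMap.ker f ≤ (maximalIdeal R) • (⊤ : Submodule R (Fin d → R))
  rank0 : Subsingleton N → d = 0

theorem exists_min_cover (N : Type u) [AddCommGroup N] [Module R N] (hfin : Module.Finite R N) :
    ∃ (d : ℕ) (f : (Fin d → R) →ₗ[R] N), Function.Surjective f ∧
      LinearMap.ker f ≤ (maximalIdeal R) • (⊤ : Submodule R (Fin d → R)) ∧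
      (Subsingleton N → d = 0) := by
  by_cases hN : Subsingleton N
  · refine ⟨0, 0, fun y => ⟨0, Subsingleton.elim _ _⟩, fun x _ => ?_, fun _ => rfl⟩
    have : (x : Fin 0 → R) = 0 := Subsingleton.elim _ _
    rw [this]; exact Submodule.zero_mem _
  · suffices h : ∀ (d : ℕ) (v : Fin d → N), Submodule.span R (Set.range v) = ⊤ →
        ∃ (d' : ℕ) (f : (Fin d' → R) →ₗ[R] N), Function.Surjective f ∧
          LinearMap.ker f ≤ (maximalIdeal R) • (⊤ : Submodule R (Fin d' → R)) by
      obtain ⟨d, v, hv⟩ := Module.Finite.exists_fin (R := R) (M := N)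
      obtain ⟨d', f, hs, hk⟩ := h d v hv
      exact ⟨d', f, hs, hk, fun hsub => absurd hsub hN⟩
    intro d
    induction d using Nat.strong_induction_on with
    | _ d IH =>
      intro v hv
      by_cases hker : LinearMap.ker (Fintype.linearCombination R v) ≤
          (maximalIdeal R) • (⊤ : Submodule R (Fin d → R))
      · refine ⟨d, Fintype.linearCombination R v, ?_, hker⟩
        intro y
        have hy : y ∈ Submodule.span R (Set.range v) := by rw [hv]; trivial
        obtain ⟨c, hc⟩ := (Submodule.mem_span_range_iff_exists_fun R).1 hy
        exact ⟨c, by simpa [Fintype.linearCombination_apply] using hc⟩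
      · -- find a relation with a unit coefficient
        obtain ⟨w, hwker, hwnot⟩ := SetLike.not_le_iff_exists.1 hker
        have hex : ∃ i, IsUnit (w i) := by
          by_contra h
          push_neg at h
          exact hwnot (pi_mem_smul_top _ _ fun i =>
            (IsLocalRing.mem_maximalIdeal _).2 (h i))
        obtain ⟨i, hu⟩ := hex
        have hsum : ∑ j, w j • v j = 0 := by
          simpa [Fintype.linearCombination_apply] using hwker
        match d, v, w, i, hu, hsum, hv with
        | e + 1, v, w, i, hu, hsum, hv =>
          set v' : Fin e → N := v ∘ i.succAbove with hv'
          have hspan : Submodule.span R (Set.range v') = ⊤ := by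
            rw [eq_top_iff, ← hv, Submodule.span_le]
            rintro _ ⟨j, rfl⟩
            rcases eq_or_ne j i with rfl | hne
            · have h1 : w j • v j = -∑ k, w (j.succAbove k) • v (j.succAbove k) := by
                rw [Fin.sum_univ_succAbove (fun l => w l • v l) j] at hsum
                linear_combination (norm := module) hsum
              have h2 : v j = (↑hu.unit⁻¹ : R) • (w j • v j) := by
                rw [smul_smul, IsUnit.val_inv_mul, one_smul]
              rw [h2, h1]
              refine Submodule.smul_mem _ _ (Submodule.neg_mem _ (Submodule.sum_mem _
                fun k _ => Submodule.smul_mem _ _ (Submodule.subset_span ⟨k, rfl⟩)))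
            · obtain ⟨k, hk⟩ := Fin.exists_succAbove_eq hne
              exact Submodule.subset_span ⟨k, congrArg v hk⟩
          exact IH e (Nat.lt_succ_self e) v' hspan


def minCover (N : ModuleCat.{u} R) (h : Module.Finite R N) : MinCover N :=
  let e := exists_min_cover (R := R) N h
  ⟨e.choose, e.choose_spec.choose, e.choose_spec.choose_spec.1,
    e.choose_spec.choose_spec.2.1, e.choose_spec.choose_spec.2.2⟩

variable [IsNoetherianRing R]

structure SyzData where
  N : ModuleCat.{u} R
  fin : Module.Finite R N

def syzStep (S : SyzData (R := R)) : SyzData (R := R) :=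
  ⟨ModuleCat.of R (LinearMap.ker (minCover S.N S.fin).f),
    Module.Finite.iff_fg.2 (IsNoetherian.noetherian _)⟩

variable (M : ModuleCat.{u} R) (hM : Module.Finite R M)

def syz : ℕ → SyzData (R := R)
  | 0 => ⟨M, hM⟩
  | i + 1 => syzStep (syz i)

def cv (i : ℕ) : MinCover (syz M hM i).N := minCover _ (syz M hM i).fin

abbrev bdim (i : ℕ) : ℕ := (cv M hM i).d

abbrev FF (i : ℕ) : ModuleCat.{u} R := ModuleCat.of R (Fin (bdim M hM i) → R)

def DD (i : ℕ) : FF M hM (i + 1) ⟶ FF M hM i :=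
  ModuleCat.ofHom ((LinearMap.ker (cv M hM i).f).subtype ∘ₗ
    ((cv M hM (i + 1)).f : (Fin (bdim M hM (i+1)) → R) →ₗ[R] (LinearMap.ker (cv M hM i).f)))

lemma DD_DD (i : ℕ) : DD M hM (i + 1) ≫ DD M hM i = 0 := by
  refine ModuleCat.hom_ext (LinearMap.ext fun x => ?_)
  show (LinearMap.ker (cv M hM i).f).subtype ((cv M hM (i+1)).f ((DD M hM (i+1)) x)) = 0
  have h : (cv M hM (i+1)).f ((DD M hM (i+1)) x) = 0 :=
    LinearMap.mem_ker.1 ((cv M hM (i+2)).f x).2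
  rw [h]; rfl

def cpx : ChainComplex (ModuleCat.{u} R) ℕ :=
  ChainComplex.of (FF M hM) (DD M hM) (DD_DD M hM)

lemma cpx_d (i : ℕ) : (cpx M hM).d (i + 1) i = DD M hM i := ChainComplex.of_d _ _ _

def cres_pi : cpx M hM ⟶ (ChainComplex.single₀ (ModuleCat.{u} R)).obj M :=
  (ChainComplex.toSingle₀Equiv _ M).symm ⟨ModuleCat.ofHom ((cv M hM 0).f :
      (Fin (bdim M hM 0) → R) →ₗ[R] M), by
    rw [cpx_d]
    refine ModuleCat.hom_ext (LinearMap.ext fun x => ?_)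
    show (cv M hM 0).f ((LinearMap.ker (cv M hM 0).f).subtype ((cv M hM 1).f x)) = 0
    exact LinearMap.mem_ker.1 ((cv M hM 1).f x).2⟩

lemma range_DD (i : ℕ) :
    LinearMap.range (DD M hM i).hom = LinearMap.ker (cv M hM i).f := by
  ext y
  constructor
  · rintro ⟨w, rfl⟩
    exact ((cv M hM (i+1)).f w).2
  · intro hy
    obtain ⟨w, hw⟩ := (cv M hM (i+1)).surj (⟨y, hy⟩ : LinearMap.ker (cv M hM i).f)
    exact ⟨w, congrArg Subtype.val hw⟩

lemma ker_DD (i : ℕ) :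
    LinearMap.ker (DD M hM i).hom = LinearMap.ker (cv M hM (i+1)).f := by
  ext w
  exact ⟨fun h => Subtype.ext h, fun h => congrArg Subtype.val h⟩

lemma cpx_exactAt_succ (n : ℕ) : (cpx M hM).ExactAt (n + 1) := by
  rw [HomologicalComplex.exactAt_iff' _ (n + 2) (n + 1) n (by simp) (by simp),
    ShortComplex.moduleCat_exact_iff_range_eq_ker]
  show LinearMap.range ((cpx M hM).d (n+2) (n+1)).hom = LinearMap.ker ((cpx M hM).d (n+1) n).hom
  rw [cpx_d, cpx_d]
  exact (range_DD M hM (n+1)).trans (ker_DD M hM n).symm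

lemma DD_f0 : DD M hM 0 ≫ ModuleCat.ofHom ((cv M hM 0).f :
    (Fin (bdim M hM 0) → R) →ₗ[R] M) = 0 := by
  refine ModuleCat.hom_ext (LinearMap.ext fun x => ?_)
  show (cv M hM 0).f ((LinearMap.ker (cv M hM 0).f).subtype ((cv M hM 1).f x)) = 0
  exact LinearMap.mem_ker.1 ((cv M hM 1).f x).2

def sc0 : ShortComplex (ModuleCat.{u} R) :=
  ShortComplex.mk (DD M hM 0) (ModuleCat.ofHom ((cv M hM 0).f : (Fin (bdim M hM 0) → R) →ₗ[R] M) :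
    FF M hM 0 ⟶ M) (DD_f0 M hM)

lemma sc0_exact : (sc0 M hM).Exact := by
  rw [ShortComplex.moduleCat_exact_iff_range_eq_ker]
  exact range_DD M hM 0

lemma sc0_epi : Epi (sc0 M hM).g := by
  rw [ModuleCat.epi_iff_surjective]
  exact (cv M hM 0).surj

def cres : ProjectiveResolution M where
  complex := cpx M hM
  projective := fun n => ModuleCat.projective_of_free (Pi.basisFun R _)
  π := cres_pi M hM
  quasiIso := ⟨fun n => by
    cases n with
    | zero =>
      rw [ChainComplex.quasiIsoAt₀_iff, ShortComplex.quasiIso_iff_of_zeros']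
      · refine (ShortComplex.exact_and_epi_g_iff_of_iso ?_).2 ⟨sc0_exact M hM, sc0_epi M hM⟩
        exact ShortComplex.isoMk (Iso.refl _) (Iso.refl _) (Iso.refl _)
          (by dsimp [HomologicalComplex.shortComplexFunctor']; simp [cpx_d, sc0]
              exact (Category.id_comp _).trans (Category.comp_id _).symm)
          (by dsimp [HomologicalComplex.shortComplexFunctor']
              simp [cres_pi, sc0, ChainComplex.toSingle₀Equiv_symm_apply_f_zero]
              refine (Category.id_comp _).trans ?_
              refine Eq.trans ?_ (Category.comp_id _).symm
              exact (ChainComplex.toSingle₀Equiv_symm_apply_f_zero (C := cpx M hM) (X := M) _ _).symm)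
      all_goals rfl
    | succ n =>
      rw [quasiIsoAt_iff_exactAt']
      · apply cpx_exactAt_succ
      · apply ChainComplex.exactAt_succ_single_obj⟩

omit [IsLocalRing R] in
lemma coord_mem_of_mem_smul_top {d : ℕ} (J : Ideal R) {w : Fin d → R}
    (hw : w ∈ J • (⊤ : Submodule R (Fin d → R))) (i : Fin d) : w i ∈ J := by
  refine Submodule.smul_induction_on hw ?_ ?_
  · intro r hr v _
    exact Ideal.mul_mem_right _ _ hr
  · intro u v hu hv
    exact J.add_mem hu hv

omit [IsLocalRing R] in
lemma apply_mem_smul_top {A B : Type u} [AddCommGroup A] [Module R A] [AddCommGroup B]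
    [Module R B] (J : Ideal R) (g : A →ₗ[R] B) {v : A}
    (hv : v ∈ J • (⊤ : Submodule R A)) : g v ∈ J • (⊤ : Submodule R B) := by
  have h1 : g v ∈ Submodule.map g (J • (⊤ : Submodule R A)) := Submodule.mem_map_of_mem hv
  rw [Submodule.map_smul''] at h1
  exact (smul_mono_right J le_top : J • Submodule.map g ⊤ ≤ J • ⊤) h1

omit [IsLocalRing R] in
lemma modcat_subsingleton_iff_isZero (X : ModuleCat.{u} R) :
    Subsingleton X ↔ Limits.IsZero X := by
  constructor
  · intro h
    exact ModuleCat.isZero_of_subsingleton X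
  · intro h
    refine ⟨fun a b => ?_⟩
    have h0 : (𝟙 X : X ⟶ X) = 0 := h.eq_of_src _ _
    have ha : a = (0 : X ⟶ X) a := by rw [← h0]; rfl
    have hb : b = (0 : X ⟶ X) b := by rw [← h0]; rfl
    rw [ha, hb]
    rfl

lemma extVanish_iff_exactAt (j : ℕ) (N : ModuleCat.{u} R) :
    extVanish R j M N ↔ ((cpx M hM).linearYonedaObj R N).ExactAt j := by
  unfold extVanish
  rw [modcat_subsingleton_iff_isZero, HomologicalComplex.exactAt_iff_isZero_homology]
  constructor
  · intro h
    exact Limits.IsZero.of_iso h ((cres M hM).isoExt j N).symm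
  · intro h
    exact Limits.IsZero.of_iso h ((cres M hM).isoExt j N)

lemma exactAt_concrete_iff (j : ℕ) (N : ModuleCat.{u} R) :
    ((cpx M hM).linearYonedaObj R N).ExactAt (j + 1) ↔
      ∀ φ : FF M hM (j + 1) ⟶ N, DD M hM (j + 1) ≫ φ = 0 →
        ∃ ψ : FF M hM j ⟶ N, DD M hM j ≫ ψ = φ := by
  rw [HomologicalComplex.exactAt_iff' _ j (j + 1) (j + 2) (by simp) (by simp),
    ShortComplex.moduleCat_exact_iff]
  have keyg : ∀ (φ : (cpx M hM).X (j + 1) ⟶ N),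
      (((cpx M hM).linearYonedaObj R N).d (j + 1) (j + 2)) φ = DD M hM (j + 1) ≫ φ := by
    intro φ
    rw [ChainComplex.linearYonedaObj_d, cpx_d]
    rfl
  have keyf : ∀ (ψ : (cpx M hM).X j ⟶ N),
      (((cpx M hM).linearYonedaObj R N).d j (j + 1)) ψ = DD M hM j ≫ ψ := by
    intro ψ
    rw [ChainComplex.linearYonedaObj_d, cpx_d]
    rfl
  constructor
  · intro h φ hφ
    obtain ⟨ψ, hψ⟩ := h φ (by
      show (((cpx M hM).linearYonedaObj R N).d (j + 1) (j + 2)) φ = 0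
      exact (keyg φ).trans hφ)
    refine ⟨ψ, ?_⟩
    exact (keyf ψ).symm.trans hψ
  · intro h φ hφ
    obtain ⟨ψ, hψ⟩ := h φ ((keyg φ).symm.trans hφ)
    refine ⟨ψ, ?_⟩
    show (((cpx M hM).linearYonedaObj R N).d j (j + 1)) ψ = φ
    exact (keyf ψ).trans hψ

lemma subsingleton_FF (i : ℕ) (hb : bdim M hM i = 0) :
    Subsingleton (Fin (bdim M hM i) → R) := by
  rw [hb]
  infer_instance

lemma exactAt_of_bdim_zero (i : ℕ) (hb : bdim M hM i = 0) (N : ModuleCat.{u} R) :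
    ((cpx M hM).linearYonedaObj R N).ExactAt i := by
  rw [HomologicalComplex.exactAt_iff]
  haveI hss : Subsingleton ((cpx M hM).X i ⟶ N) := by
    refine ⟨fun f g => ?_⟩
    ext v
    have hv : v = (0 : Fin (bdim M hM i) → R) :=
      @Subsingleton.elim _ (subsingleton_FF M hM i hb) _ _
    rw [show v = 0 from hv, map_zero, map_zero]
  have hz : Limits.IsZero (((cpx M hM).linearYonedaObj R N).X i) := by
    rw [ChainComplex.linearYonedaObj_X]
    exact @ModuleCat.isZero_of_subsingleton _ _ _ hss
  exact CategoryTheory.ShortComplex.exact_of_isZero_X₂ _ (by exact hz)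

lemma bdim_succ_zero (i : ℕ) (hb : bdim M hM i = 0) : bdim M hM (i + 1) = 0 := by
  apply (cv M hM (i + 1)).rank0
  haveI := subsingleton_FF M hM i hb
  show Subsingleton ↥(LinearMap.ker (cv M hM i).f)
  infer_instance

lemma bdim_zero_of_le (i k : ℕ) (hik : i ≤ k) (hb : bdim M hM i = 0) :
    bdim M hM k = 0 := by
  induction k with
  | zero =>
    have h0 : i = 0 := Nat.le_zero.1 hik
    exact h0 ▸ hb
  | succ k IH =>
    rcases Nat.lt_or_ge i (k + 1) with h | h
    · exact bdim_succ_zero M hM k (IH (by omega))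
    · have h0 : i = k + 1 := by omega
      exact h0 ▸ hb

theorem key_vanish
    (I : Ideal R)
    (x : R) (hxI : ∀ c ∈ maximalIdeal R, c * x ∈ I)
    (a : R) (ha : a ∈ maximalIdeal R) (hax : a * x ∉ maximalIdeal R * I)
    (haxI : a * x ∈ I)
    (n' : ℕ)
    (h1 : ∀ φ : FF M hM (n' + 1) ⟶ ModuleCat.of R ↥I, DD M hM (n' + 1) ≫ φ = 0 →
        ∃ ψ : FF M hM n' ⟶ ModuleCat.of R ↥I, DD M hM n' ≫ ψ = φ)
    (h2 : ∀ φ : FF M hM (n' + 2) ⟶ ModuleCat.of R ↥I, DD M hM (n' + 2) ≫ φ = 0 →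
        ∃ ψ : FF M hM (n' + 1) ⟶ ModuleCat.of R ↥I, DD M hM (n' + 1) ≫ ψ = φ) :
    bdim M hM (n' + 1) = 0 := by
  by_contra hb
  have hbpos : 0 < bdim M hM (n' + 1) := Nat.pos_of_ne_zero hb
  set i0 : Fin (bdim M hM (n' + 1)) := ⟨0, hbpos⟩ with hi0
  set f₀ : (Fin (bdim M hM (n' + 1)) → R) →ₗ[R] R := x • LinearMap.proj i0 with hf₀
  have hDDmem : ∀ (i : ℕ) (w : Fin (bdim M hM (i + 1)) → R),
      DD M hM i w ∈ (maximalIdeal R) • (⊤ : Submodule R (Fin (bdim M hM i) → R)) := by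
    intro i w
    refine (cv M hM i).ker_le ?_
    rw [← range_DD M hM i]
    exact LinearMap.mem_range_self _ w
  have hmemI : ∀ w : Fin (bdim M hM (n' + 2)) → R, f₀ (DD M hM (n' + 1) w) ∈ I := by
    intro w
    have hco : (DD M hM (n' + 1) w) i0 ∈ maximalIdeal R :=
      coord_mem_of_mem_smul_top _ (hDDmem (n' + 1) w) i0
    show x • (DD M hM (n' + 1) w) i0 ∈ I
    rw [smul_eq_mul, mul_comm]
    exact hxI _ hco
  set ψ : FF M hM (n' + 2) ⟶ ModuleCat.of R ↥I :=
    ModuleCat.ofHom (LinearMap.codRestrict I (f₀ ∘ₗ ((DD M hM (n' + 1)).hom :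
      (Fin (bdim M hM (n' + 2)) → R) →ₗ[R] (Fin (bdim M hM (n' + 1)) → R))) hmemI) with hψ
  have hψco : DD M hM (n' + 2) ≫ ψ = 0 := by
    refine ModuleCat.hom_ext (LinearMap.ext fun w => ?_)
    apply Subtype.ext
    show f₀ (DD M hM (n' + 1) (DD M hM (n' + 2) w)) = 0
    have h0 : DD M hM (n' + 1) (DD M hM (n' + 2) w) = 0 := by
      have hc : (DD M hM (n' + 2) ≫ DD M hM (n' + 1)) w = 0 := by
        rw [DD_DD M hM (n' + 1)]
        rfl
      exact hc
    rw [h0, map_zero]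
  obtain ⟨h, hh⟩ := h2 ψ hψco
  set hR : (Fin (bdim M hM (n' + 1)) → R) →ₗ[R] ↥I := h.hom with hhR
  set F' : (Fin (bdim M hM (n' + 1)) → R) →ₗ[R] R := f₀ - I.subtype ∘ₗ hR with hF'def
  have hF' : ∀ w, F' (DD M hM (n' + 1) w) = 0 := by
    intro w
    have hhw : hR (DD M hM (n' + 1) w) = ψ w := by
      have hc : (DD M hM (n' + 1) ≫ h) w = ψ w := by rw [hh]
      exact hc
    show f₀ (DD M hM (n' + 1) w) - ↑(hR (DD M hM (n' + 1) w)) = 0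
    rw [hhw]
    show f₀ (DD M hM (n' + 1) w) - f₀ (DD M hM (n' + 1) w) = 0
    rw [sub_self]
  have hF'apply : ∀ v, F' v = x * v i0 - ↑(hR v) := fun v => rfl
  have hGmem : ∀ v, (a • F') v ∈ I := by
    intro v
    show a • F' v ∈ I
    rw [smul_eq_mul, hF'apply, mul_sub]
    refine sub_mem ?_ (I.mul_mem_left a (hR v).2)
    rw [← mul_assoc]
    exact I.mul_mem_right _ haxI
  set G : FF M hM (n' + 1) ⟶ ModuleCat.of R ↥I := ModuleCat.ofHom (LinearMap.codRestrict I (a • F') hGmem)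
    with hG
  set GR : (Fin (bdim M hM (n' + 1)) → R) →ₗ[R] ↥I := G.hom with hGR
  have hGco : DD M hM (n' + 1) ≫ G = 0 := by
    refine ModuleCat.hom_ext (LinearMap.ext fun w => ?_)
    apply Subtype.ext
    show a • F' (DD M hM (n' + 1) w) = 0
    rw [hF', smul_zero]
  obtain ⟨g, hg⟩ := h1 G hGco
  set gR : (Fin (bdim M hM n') → R) →ₗ[R] ↥I := g.hom with hgR
  set e : Fin (bdim M hM (n' + 1)) → R := Pi.single i0 1 with he
  have hGe : (↑(GR e) : R) = a * x - a * ↑(hR e) := by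
    show a • F' e = _
    rw [smul_eq_mul, hF'apply, mul_sub]
    have he1 : e i0 = 1 := Pi.single_eq_same i0 1
    rw [he1, mul_one]
  have hge : GR e = gR (DD M hM n' e) := by
    have hc : (DD M hM n' ≫ g) e = G e := by rw [hg]
    exact hc.symm
  have hmem2 : (↑(gR (DD M hM n' e)) : R) ∈ maximalIdeal R * I := by
    have hv : gR (DD M hM n' e) ∈ (maximalIdeal R) • (⊤ : Submodule R ↥I) :=
      apply_mem_smul_top _ gR (hDDmem n' e)
    have hval : (↑(gR (DD M hM n' e)) : R) ∈
        Submodule.map I.subtype ((maximalIdeal R) • (⊤ : Submodule R ↥I)) :=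
      Submodule.mem_map_of_mem hv
    rw [Submodule.map_smul'', Submodule.map_subtype_top] at hval
    rwa [← Ideal.smul_eq_mul]
  rw [← hge, hGe] at hmem2
  have hfin : a * x ∈ maximalIdeal R * I := by
    have h3 : a * ↑(hR e) ∈ maximalIdeal R * I := Ideal.mul_mem_mul ha (hR e).2
    have h4 := add_mem hmem2 h3
    rwa [sub_add_cancel] at h4
  exact hax hfin

end Aux

/-- Let `(R, m)` be a Noetherian local ring, `M` a nonzero finitely generated module, and
`I` a nonzero weakly `m`-full ideal with `depth(R/I) = 0` (equivalently `(I : m) ≠ I`).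
If `Ext^n(M, I) = Ext^{n+1}(M, I) = 0` for some `n ≥ 1`, then `pd M < n`. -/
theorem stmt10 [IsNoetherianRing R]
    (M : ModuleCat.{u} R) (hM : Module.Finite R M) (hM0 : Nontrivial M)
    (I : Ideal R) (hI0 : I ≠ ⊥) (hI : I ≠ ⊤)
    (hwmf : Submodule.colon (maximalIdeal R * I) (maximalIdeal R) = I)
    (hdepth : Submodule.colon I (maximalIdeal R) ≠ I)
    (n : ℕ) (hn : 1 ≤ n)
    (h1 : extVanish R n M (ModuleCat.of R I))
    (h2 : extVanish R (n + 1) M (ModuleCat.of R I)) :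
    pdLE R M (n - 1) := by
  have hsub : I ≤ Submodule.colon I (maximalIdeal R) := by
    intro r hr
    refine Submodule.mem_colon.2 fun p hp => ?_
    rw [smul_eq_mul]
    exact I.mul_mem_right p hr
  have hlt : I < Submodule.colon I (maximalIdeal R) :=
    lt_of_le_of_ne hsub (Ne.symm hdepth)
  obtain ⟨x, hxmem, hxI⟩ := SetLike.exists_of_lt hlt
  have hxI' : ∀ c ∈ maximalIdeal R, c * x ∈ I := by
    intro c hc
    have hx := Submodule.mem_colon.1 hxmem c hc
    rwa [smul_eq_mul, mul_comm] at hx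
  have hxnot : x ∉ Submodule.colon (maximalIdeal R * I) (maximalIdeal R) := by
    rw [hwmf]; exact hxI
  have hex : ¬ ∀ p ∈ maximalIdeal R, x • p ∈ maximalIdeal R * I :=
    fun hcon => hxnot (Submodule.mem_colon.2 hcon)
  push_neg at hex
  obtain ⟨a, ha, hax0⟩ := hex
  have hax : a * x ∉ maximalIdeal R * I := by
    rwa [smul_eq_mul, mul_comm x a] at hax0
  have haxI : a * x ∈ I := hxI' a ha
  obtain ⟨n', rfl⟩ : ∃ n', n = n' + 1 := ⟨n - 1, by omega⟩
  have H1 := (exactAt_concrete_iff M hM n' (ModuleCat.of R ↥I)).1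
    ((extVanish_iff_exactAt M hM (n' + 1) (ModuleCat.of R ↥I)).1 h1)
  have H2 := (exactAt_concrete_iff M hM (n' + 1) (ModuleCat.of R ↥I)).1
    ((extVanish_iff_exactAt M hM (n' + 1 + 1) (ModuleCat.of R ↥I)).1 h2)
  have hkey : bdim M hM (n' + 1) = 0 := key_vanish M hM I x hxI' a ha hax haxI n' H1 H2
  intro N i hi
  have hi' : n' + 1 ≤ i := by omega
  rw [extVanish_iff_exactAt M hM i N]
  exact exactAt_of_bdim_zero M hM i (bdim_zero_of_le M hM (n' + 1) i hi' hkey) N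
end
end

section
/- Let (R, m) be a commutative Noetherian local ring and I a proper weakly m-full ideal with (I : m) ≠ I. If Ext_R^1(I, I) = Ext_R^2(I, I) = 0, then I is a free R-module, i.e., I ≅ R. -/
open CategoryTheory IsLocalRing

/-!
Pick `x ∈ (I : m) \ I`. Since `(m I : m) = I`, some `a ∈ m` has `e := a x ∉ m I`, while
`e ∈ I`; hence `r e ∈ m I` forces `r ∈ m`. Let `p : F ↠ I` be a minimal free cover with kernel
`S ⊆ m F`, and `q : G ↠ S` a minimal free cover of `S`, with kernel `K ⊆ m G`.
For a coordinate `l : G → R`, the map `x l : K → I` extends to `ν : G → I`, because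
`Ext¹(S, I) ≅ Ext²(I, I) = 0`. Then `e l - a ν` vanishes on `K`, so it induces a map `S → I`;
by `Ext¹(I, I) = 0` this extends to `F`, so it takes values in `m I` as `S ⊆ m F`.
Therefore `e l(G) ⊆ m I`, i.e. `l(G) ⊆ m`, which is absurd unless `G = 0`.
So `S = 0`, `I` is free, and a nonzero free ideal has rank one.
-/

universe u

open CategoryTheory IsLocalRing

variable {R : Type u} [CommRing R]

namespace CategoryTheory.ProjectiveResolution

theorem extVanish_succ_iff {M : ModuleCat.{u} R} (P : ProjectiveResolution M)
    (N : ModuleCat.{u} R) (n : ℕ) :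
    extVanish R (n + 1) M N ↔ ∀ ψ : P.complex.X (n + 1) ⟶ N,
      P.complex.d (n + 2) (n + 1) ≫ ψ = 0 →
        ∃ χ : P.complex.X n ⟶ N, P.complex.d (n + 1) n ≫ χ = ψ := by
  rw [extVanish, ← ModuleCat.isZero_iff_subsingleton, (P.isoExt (n + 1) N).isZero_iff,
    ← HomologicalComplex.exactAt_iff_isZero_homology,
    HomologicalComplex.exactAt_iff' _ n (n + 1) (n + 2) (by simp) (by simp),
    ShortComplex.moduleCat_exact_iff]
  rfl

variable {A M : Type u} [AddCommGroup A] [Module R A] [Module.Projective R A]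
  [AddCommGroup M] [Module R M]

/-- The resolution `⋯ → Q₁ → Q₀ → A` of `M`, spliced from `p : A ↠ M` and a resolution `Q` of
`ker p`. -/
noncomputable def ofSurjective (p : A →ₗ[R] M) (hp : Function.Surjective p)
    (Q : ProjectiveResolution (ModuleCat.of R (LinearMap.ker p))) :
    ProjectiveResolution (ModuleCat.of R M) where
  complex := Q.complex.augment (Q.π.f 0 ≫ ModuleCat.ofHom (LinearMap.ker p).subtype)
    (Q.complex_d_comp_π_f_zero_assoc _ |>.trans Limits.zero_comp)
  projective
    | 0 => (IsProjective.iff_projective (ModuleCat.of R A)).1 inferInstance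
    | n + 1 => Q.projective n
  π := (ChainComplex.toSingle₀Equiv _ _).symm ⟨ModuleCat.ofHom p, by
    ext x
    exact (Q.π.f 0 x).2⟩
  quasiIso := ⟨fun n => by
    rcases n with _ | _ | k
    · rw [ChainComplex.quasiIsoAt₀_iff, ShortComplex.quasiIso_iff_of_zeros' _ rfl rfl rfl,
        ShortComplex.moduleCat_exact_iff]
      refine ⟨fun x hx => ?_, (ModuleCat.epi_iff_surjective _).2 hp⟩
      obtain ⟨y, hy⟩ := (ModuleCat.epi_iff_surjective (Q.π.f 0)).1 inferInstance ⟨x, hx⟩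
      exact ⟨y, congrArg Subtype.val hy⟩
    · rw [quasiIsoAt_iff_exactAt' (hL := ChainComplex.exactAt_succ_single_obj ..),
        HomologicalComplex.exactAt_iff' _ 2 1 0 (by simp) (by simp),
        ShortComplex.moduleCat_exact_iff]
      exact fun x hx => (ShortComplex.moduleCat_exact_iff _).1 Q.exact₀ x (Subtype.ext hx)
    · rw [quasiIsoAt_iff_exactAt' (hL := ChainComplex.exactAt_succ_single_obj ..),
        HomologicalComplex.exactAt_iff' _ (k + 3) (k + 2) (k + 1) (by simp) (by simp),
        ShortComplex.moduleCat_exact_iff]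
      exact (ShortComplex.moduleCat_exact_iff _).1 (Q.exact_succ k)⟩

end CategoryTheory.ProjectiveResolution

namespace LinearMap

variable {A M N : Type u} [AddCommGroup A] [Module R A] [Module.Projective R A]
  [AddCommGroup M] [Module R M] [AddCommGroup N] [Module R N]
  {p : A →ₗ[R] M}

theorem exists_extension_of_extVanish_one (hp : Function.Surjective p)
    (h : extVanish R 1 (ModuleCat.of R M) (ModuleCat.of R N)) (φ : ker p →ₗ[R] N) :
    ∃ Φ : A →ₗ[R] N, Φ ∘ₗ (ker p).subtype = φ := by
  let Q := ProjectiveResolution.of (ModuleCat.of R (ker p))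
  obtain ⟨χ, hχ⟩ := ((Q.ofSurjective p hp).extVanish_succ_iff _ 0).1 h
    (Q.π.f 0 ≫ ModuleCat.ofHom φ) (Q.complex_d_comp_π_f_zero_assoc _ |>.trans Limits.zero_comp)
  have hιχ : ModuleCat.ofHom (ker p).subtype ≫ χ = ModuleCat.ofHom φ :=
    (cancel_epi (Q.π.f 0)).1 ((Category.assoc _ _ _).symm.trans hχ)
  exact ⟨χ.hom, congrArg ModuleCat.Hom.hom hιχ⟩

theorem extVanish_ker_of_extVanish_succ (hp : Function.Surjective p) {n : ℕ}
    (h : extVanish R (n + 2) (ModuleCat.of R M) (ModuleCat.of R N)) :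
    extVanish R (n + 1) (ModuleCat.of R (ker p)) (ModuleCat.of R N) := by
  let Q := ProjectiveResolution.of (ModuleCat.of R (ker p))
  exact (Q.extVanish_succ_iff _ n).2 fun ψ hψ =>
    ((Q.ofSurjective p hp).extVanish_succ_iff _ (n + 1)).1 h ψ hψ

theorem apply_mem_smul_top_of_extVanish_one (hp : Function.Surjective p) {J : Ideal R}
    (hker : ker p ≤ J • ⊤) (h : extVanish R 1 (ModuleCat.of R M) (ModuleCat.of R N))
    (φ : ker p →ₗ[R] N) (s : ker p) : φ s ∈ J • (⊤ : Submodule R N) := by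
  obtain ⟨Φ, rfl⟩ := exists_extension_of_extVanish_one hp h φ
  exact Submodule.smul_top_le_comap_smul_top J Φ (hker s.2)

end LinearMap

theorem Ideal.exists_mul_notMem_mul_of_colon_eq {m I : Ideal R}
    (hwmf : Submodule.colon (m * I) m = I) (hdepth : Submodule.colon I m ≠ I) :
    ∃ x a : R, (∀ y ∈ m, y * x ∈ I) ∧ a ∈ m ∧ a * x ∉ m * I := by
  obtain ⟨x, hxc, hxI⟩ : ∃ x ∈ Submodule.colon I m, x ∉ I := by
    by_contra! h
    exact hdepth (le_antisymm h fun r hr => Submodule.mem_colon.2 fun y _ => I.mul_mem_right y hr)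
  have hx : ∀ y ∈ m, y * x ∈ I := fun y hy => by
    simpa [mul_comm] using Submodule.mem_colon.1 hxc y hy
  obtain ⟨a, ha, hax⟩ : ∃ a ∈ m, a * x ∉ m * I := by
    by_contra! h
    exact hxI (hwmf ▸ Submodule.mem_colon.2 fun y hy => by simpa [mul_comm] using h y hy)
  exact ⟨x, a, hx, ha, hax⟩

theorem Ideal.nonempty_linearEquiv_self_of_linearEquiv_pi [Nontrivial R] {I : Ideal R}
    (hI : I ≠ ⊥) {n : ℕ} (e : I ≃ₗ[R] (Fin n → R)) : Nonempty (I ≃ₗ[R] R) := by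
  have hle : n ≤ 1 := by
    simpa [e.finrank_eq] using Submodule.finrank_le (R := R) (M := R) I
  have hne : n ≠ 0 := by
    rintro rfl
    have := e.toEquiv.subsingleton
    exact hI (Submodule.eq_bot_of_subsingleton)
  obtain rfl : n = 1 := by omega
  exact ⟨e.trans (LinearEquiv.funUnique (Fin 1) R R)⟩

namespace IsLocalRing

variable [IsLocalRing R]

variable (R) in
theorem exists_surjective_ker_le_maximalIdeal_smul (M : Type u) [AddCommGroup M] [Module R M]
    [Module.Finite R M] :
    ∃ (n : ℕ) (f : (Fin n → R) →ₗ[R] M),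
      Function.Surjective f ∧ LinearMap.ker f ≤ maximalIdeal R • ⊤ := by
  let m := maximalIdeal R
  let : Field (R ⧸ m) := Ideal.Quotient.field m
  let b := Module.finBasis (R ⧸ m) (M ⧸ (m • ⊤ : Submodule R M))
  choose v hv using fun i => Submodule.Quotient.mk_surjective (m • ⊤ : Submodule R M) (b i)
  let f := Fintype.linearCombination R v
  have hmk : ∀ c, Submodule.Quotient.mk (p := m • ⊤) (f c) =
      ∑ i, Ideal.Quotient.mk m (c i) • b i := by
    intro c
    rw [Fintype.linearCombination_apply, ← Submodule.mkQ_apply, map_sum]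
    simp [← hv]
  refine ⟨_, f, ?_, fun c hc => ?_⟩
  · rw [← LinearMap.range_eq_top, ← map_mkQ_eq_top, eq_top_iff]
    rintro z -
    obtain ⟨z, rfl⟩ := Submodule.Quotient.mk_surjective _ z
    choose c hc using fun i => Ideal.Quotient.mk_surjective (b.repr (Submodule.Quotient.mk z) i)
    refine ⟨f c, LinearMap.mem_range_self f c, ?_⟩
    rw [Submodule.mkQ_apply, hmk]
    simp_rw [hc]
    exact b.sum_repr _
  · have hcoord : ∀ i, c i ∈ m := fun i => Ideal.Quotient.eq_zero_iff_mem.1 <|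
      Fintype.linearIndependent_iff.1 b.linearIndependent _
        (by rw [← hmk, LinearMap.mem_ker.1 hc]; rfl) i
    rw [pi_eq_sum_univ c]
    exact Submodule.sum_mem _ fun i _ => Submodule.smul_mem_smul (hcoord i) Submodule.mem_top

end IsLocalRing

namespace Ideal

variable [IsLocalRing R] {I : Ideal R} {x a : R} {F G : Type u}
  [AddCommGroup F] [Module R F] [Module.Projective R F]
  [AddCommGroup G] [Module R G] [Module.Projective R G]

theorem apply_mem_maximalIdeal_of_extVanish (hx : ∀ y ∈ maximalIdeal R, y * x ∈ I)
    (ha : a ∈ maximalIdeal R) (hax : a * x ∉ maximalIdeal R * I)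
    (h1 : extVanish R 1 (ModuleCat.of R I) (ModuleCat.of R I))
    (h2 : extVanish R 2 (ModuleCat.of R I) (ModuleCat.of R I))
    {p : F →ₗ[R] I} (hp : Function.Surjective p) (hker : LinearMap.ker p ≤ maximalIdeal R • ⊤)
    {q : G →ₗ[R] LinearMap.ker p} (hq : Function.Surjective q)
    (l : G →ₗ[R] R) (hl : ∀ g ∈ LinearMap.ker q, l g ∈ maximalIdeal R) (g : G) :
    l g ∈ maximalIdeal R := by
  let ν : LinearMap.ker q →ₗ[R] I :=
    LinearMap.codRestrict I (x • l ∘ₗ (LinearMap.ker q).subtype) fun s => by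
      simpa [mul_comm] using hx _ (hl s s.2)
  obtain ⟨ν', hν'⟩ := LinearMap.exists_extension_of_extVanish_one hq
    (LinearMap.extVanish_ker_of_extVanish_succ hp h2) ν
  let μ : G →ₗ[R] I := LinearMap.codRestrict I ((a * x) • l)
    fun g => by simpa [mul_assoc] using I.mul_mem_right (l g) (hx a ha)
  have hker_le : LinearMap.ker q ≤ LinearMap.ker (μ - a • ν') := by
    intro s hs
    have hνs : (ν' s : R) = x * l s := by
      simpa [ν] using congrArg Subtype.val (LinearMap.congr_fun hν' ⟨s, hs⟩)
    ext
    simp [μ, hνs, mul_assoc]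
  let θ := (LinearMap.ker q).liftQ _ hker_le ∘ₗ
    (q.quotKerEquivOfSurjective hq).symm.toLinearMap
  have hμ : μ g ∈ maximalIdeal R • (⊤ : Submodule R I) := by
    have hθ : θ (q g) = μ g - a • ν' g := by simp [θ]
    have := LinearMap.apply_mem_smul_top_of_extVanish_one hp hker h1 θ (q g)
    rw [hθ] at this
    simpa using Submodule.add_mem _ this
      (Submodule.smul_mem_smul ha (Submodule.mem_top (x := ν' g)))
  rw [Submodule.mem_smul_top_iff, Ideal.smul_eq_mul] at hμ
  by_contra hg
  exact hax ((unit_mul_mem_iff_mem _ (notMem_maximalIdeal.1 hg)).1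
    (by simpa [μ, mul_comm] using hμ))

theorem ker_eq_bot_of_extVanish [IsNoetherianRing R] [Module.Finite R F]
    (hx : ∀ y ∈ maximalIdeal R, y * x ∈ I)
    (ha : a ∈ maximalIdeal R) (hax : a * x ∉ maximalIdeal R * I)
    (h1 : extVanish R 1 (ModuleCat.of R I) (ModuleCat.of R I))
    (h2 : extVanish R 2 (ModuleCat.of R I) (ModuleCat.of R I))
    {p : F →ₗ[R] I} (hp : Function.Surjective p)
    (hker : LinearMap.ker p ≤ maximalIdeal R • ⊤) : LinearMap.ker p = ⊥ := by
  obtain ⟨n, q, hq, hkerq⟩ := exists_surjective_ker_le_maximalIdeal_smul R (LinearMap.ker p)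
  have : IsEmpty (Fin n) := ⟨fun i => by
    have hl : ∀ g ∈ LinearMap.ker q, LinearMap.proj (R := R) i g ∈ maximalIdeal R :=
      fun g hg => by
        simpa using Submodule.smul_top_le_comap_smul_top _ (LinearMap.proj (R := R) i) (hkerq hg)
    refine (maximalIdeal.isMaximal R).ne_top (eq_top_of_isUnit_mem _ ?_ isUnit_one)
    simpa using apply_mem_maximalIdeal_of_extVanish hx ha hax h1 h2 hp hker hq
      (LinearMap.proj i) hl (Pi.single i 1)⟩
  refine eq_bot_iff.2 fun s hs => ?_
  obtain ⟨g, hg⟩ := hq ⟨s, hs⟩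
  simpa [Subsingleton.elim g 0] using congrArg Subtype.val hg.symm

end Ideal

variable (R) [IsLocalRing R]

theorem stmt11 [IsNoetherianRing R]
    (I : Ideal R)
    (hwmf : Submodule.colon (maximalIdeal R * I) (maximalIdeal R) = I)
    (hdepth : Submodule.colon I (maximalIdeal R) ≠ I)
    (h1 : extVanish R 1 (ModuleCat.of R I) (ModuleCat.of R I))
    (h2 : extVanish R 2 (ModuleCat.of R I) (ModuleCat.of R I)) :
    Nonempty (I ≃ₗ[R] R) := by
  obtain ⟨x, a, hx, ha, hax⟩ := Ideal.exists_mul_notMem_mul_of_colon_eq hwmf hdepth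
  have hI_ne_bot : I ≠ ⊥ := by
    rintro rfl
    exact hdepth (by simpa using hwmf)
  obtain ⟨n, p, hp, hker⟩ := exists_surjective_ker_le_maximalIdeal_smul R I
  have hinj : Function.Injective p :=
    LinearMap.ker_eq_bot.1 (I.ker_eq_bot_of_extVanish hx ha hax h1 h2 hp hker)
  exact I.nonempty_linearEquiv_self_of_linearEquiv_pi hI_ne_bot
    (LinearEquiv.ofBijective p ⟨hinj, hp⟩).symm
end

section
/- Let S = k[[t]] be a power series ring over a field k and R = k[[t^5, t^6, t^8, t^9]] the numerical semigroup subring. Then the ideal I = (t^5, t^8, t^9) of R is not integrally closed and is not weakly m-full, where m is the maximal ideal of R. -/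
open IsLocalRing PowerSeries

set_option synthInstance.maxHeartbeats 1000000
set_option maxHeartbeats 1000000

/-- An ideal `I` is integrally closed if every element satisfying an equation of integral
dependence over `I` belongs to `I`. -/
def intClosedIdeal {A : Type*} [CommRing A] (I : Ideal A) : Prop :=
  ∀ x : A, (∃ n : ℕ, 0 < n ∧ ∃ c : ℕ → A, (∀ i, 1 ≤ i → i ≤ n → c i ∈ I ^ i) ∧
      x ^ n + ∑ i ∈ Finset.Icc 1 n, c i * x ^ (n - i) = 0) → x ∈ I

lemma memS_iff (n : ℕ) : n ∈ AddSubmonoid.closure ({5, 6, 8, 9} : Set ℕ) ↔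
    n = 0 ∨ n = 5 ∨ n = 6 ∨ n = 8 ∨ n = 9 ∨ 10 ≤ n := by
  constructor
  · intro h
    induction h using AddSubmonoid.closure_induction with
    | mem x hx => rcases hx with h|h|h|h <;> simp_all
    | zero => left; rfl
    | add a b _ _ ha hb => omega
  · have h5 : (5:ℕ) ∈ AddSubmonoid.closure ({5, 6, 8, 9} : Set ℕ) :=
      AddSubmonoid.subset_closure (by simp)
    have h6 : (6:ℕ) ∈ AddSubmonoid.closure ({5, 6, 8, 9} : Set ℕ) :=
      AddSubmonoid.subset_closure (by simp)
    have h8 : (8:ℕ) ∈ AddSubmonoid.closure ({5, 6, 8, 9} : Set ℕ) :=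
      AddSubmonoid.subset_closure (by simp)
    have h9 : (9:ℕ) ∈ AddSubmonoid.closure ({5, 6, 8, 9} : Set ℕ) :=
      AddSubmonoid.subset_closure (by simp)
    have big : ∀ n : ℕ, 10 ≤ n → n ∈ AddSubmonoid.closure ({5, 6, 8, 9} : Set ℕ) := by
      intro n
      induction n using Nat.strong_induction_on with
      | _ n ih =>
        intro hn
        rcases Nat.lt_or_ge n 15 with h | h
        · interval_cases n
          · exact add_mem h5 h5
          · exact add_mem h5 h6
          · exact add_mem h6 h6
          · exact add_mem h5 h8
          · exact add_mem h5 h9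
        · have : n - 5 + 5 = n := by omega
          rw [← this]
          exact add_mem (ih (n-5) (by omega) (by omega)) h5
    rintro (rfl|rfl|rfl|rfl|rfl|h)
    · exact zero_mem _
    · exact h5
    · exact h6
    · exact h8
    · exact h9
    · exact big _ h

/-- selection of a generator for each nonzero semigroup element -/
def sel (n : ℕ) : ℕ :=
  if n = 6 ∨ n = 12 then 6 else if n = 8 then 8 else if n = 9 then 9 else 5

lemma sel_spec {n : ℕ} (hn : n ∈ AddSubmonoid.closure ({5, 6, 8, 9} : Set ℕ))
    (h0 : n ≠ 0) : sel n ≤ n ∧ (n - sel n) ∈ AddSubmonoid.closure ({5, 6, 8, 9} : Set ℕ) := by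
  rw [memS_iff] at hn
  unfold sel
  split_ifs with h1 h2 h3 <;>
    exact ⟨by omega, (memS_iff _).2 (by omega)⟩

/-- Let `k` be a field and `R = k[[t⁵, t⁶, t⁸, t⁹]] ⊆ k[[t]]` the numerical semigroup
ring (power series supported on the semigroup generated by `5, 6, 8, 9`). Then the ideal
`I = (t⁵, t⁸, t⁹)` of `R` is not integrally closed and is not weakly `m`-full, where `m`
is the maximal ideal of `R`. -/
theorem stmt15 (k : Type*) [Field k]
    (R : Subalgebra k (PowerSeries k))
    (hR : ∀ f : PowerSeries k, f ∈ R ↔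
      ∀ n : ℕ, n ∉ AddSubmonoid.closure ({5, 6, 8, 9} : Set ℕ) →
        PowerSeries.coeff n f = 0)
    [IsLocalRing R]
    (I : Ideal R)
    (hI : I = Ideal.span {x : R | (x : PowerSeries k) = X ^ 5 ∨
      (x : PowerSeries k) = X ^ 8 ∨ (x : PowerSeries k) = X ^ 9}) :
    ¬ intClosedIdeal I ∧
      Submodule.colon (maximalIdeal R * I) (maximalIdeal R) ≠ I := by
  -- basic coefficient facts
  have hrc : ∀ (r : R) (n : ℕ), ¬(n = 0 ∨ n = 5 ∨ n = 6 ∨ n = 8 ∨ n = 9 ∨ 10 ≤ n) →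
      coeff n (r : PowerSeries k) = 0 := by
    intro r n hn
    exact (hR _).1 r.2 n (by rw [memS_iff]; exact hn)
  have hXpow : ∀ g : ℕ, (g = 5 ∨ g = 6 ∨ g = 8 ∨ g = 9 ∨ g = 12) →
      ((X : PowerSeries k) ^ g ∈ R) := by
    intro g hg
    rw [hR]
    intro n hn
    rw [coeff_X_pow, if_neg]
    rintro rfl
    exact hn ((memS_iff n).2 (by omega))
  set t5 : R := ⟨X ^ 5, hXpow 5 (by norm_num)⟩ with ht5
  set t6 : R := ⟨X ^ 6, hXpow 6 (by norm_num)⟩ with ht6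
  set t8 : R := ⟨X ^ 8, hXpow 8 (by norm_num)⟩ with ht8
  set t9 : R := ⟨X ^ 9, hXpow 9 (by norm_num)⟩ with ht9
  set t12 : R := ⟨X ^ 12, hXpow 12 (by norm_num)⟩ with ht12
  have h5I : t5 ∈ I := hI ▸ Ideal.subset_span (Or.inl rfl)
  have h8I : t8 ∈ I := hI ▸ Ideal.subset_span (Or.inr (Or.inl rfl))
  have h9I : t9 ∈ I := hI ▸ Ideal.subset_span (Or.inr (Or.inr rfl))
  -- every element of I has vanishing coefficients in degrees 0, 6, 12
  have hIcoeff : ∀ x : R, x ∈ I → coeff 0 (x : PowerSeries k) = 0 ∧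
      coeff 6 (x : PowerSeries k) = 0 ∧ coeff 12 (x : PowerSeries k) = 0 := by
    intro x hx
    rw [hI] at hx
    induction hx using Submodule.span_induction with
    | mem x hx =>
      rcases hx with h | h | h <;> rw [h] <;>
        refine ⟨?_, ?_, ?_⟩ <;> simp [coeff_X_pow]
    | zero => simp
    | add x y _ _ ihx ihy =>
      have hco : ((x + y : R) : PowerSeries k) = (x : PowerSeries k) + y := by
        push_cast; ring
      rw [hco]
      simp only [map_add, ihx.1, ihx.2.1, ihx.2.2, ihy.1, ihy.2.1, ihy.2.2]
      norm_num
    | smul r x _ ih =>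
      have hco : ((r • x : R) : PowerSeries k) = (r : PowerSeries k) * x := by
        push_cast [smul_eq_mul]; ring
      rw [hco]
      refine ⟨?_, ?_, ?_⟩ <;>
        rw [coeff_mul, Finset.Nat.sum_antidiagonal_eq_sum_range_succ_mk] <;>
        simp only [Finset.sum_range_succ, Finset.sum_range_zero]
      · simp [ih.1]
      · rw [ih.1, ih.2.1, hrc r 1 (by omega), hrc r 2 (by omega), hrc r 3 (by omega),
          hrc r 4 (by omega), hrc x 1 (by omega)]
        ring
      · rw [ih.1, ih.2.1, ih.2.2, hrc r 1 (by omega), hrc r 2 (by omega),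
          hrc r 3 (by omega), hrc r 4 (by omega), hrc r 7 (by omega),
          hrc x 1 (by omega), hrc x 2 (by omega), hrc x 3 (by omega),
          hrc x 4 (by omega), hrc x 7 (by omega)]
        ring
  have hnotI6 : t6 ∉ I := by
    intro h
    have := (hIcoeff _ h).2.1
    rw [ht6] at this
    simp [coeff_X_pow] at this
  have hnotI12 : t12 ∉ I := by
    intro h
    have := (hIcoeff _ h).2.2
    rw [ht12] at this
    simp [coeff_X_pow] at this
  -- elements of R with zero constant term are nonunits ⇒ in maximal ideal
  have hmemMax : ∀ x : R, coeff 0 (x : PowerSeries k) = 0 → x ∈ maximalIdeal R := by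
    intro x hx
    rw [mem_maximalIdeal, mem_nonunits_iff]
    rintro ⟨u, rfl⟩
    have h1 : (u.val : R) * (u.inv : R) = 1 := u.val_inv
    have h2 : ((u.val : R) : PowerSeries k) * ((u.inv : R) : PowerSeries k) = 1 := by
      rw [← Subalgebra.coe_mul, h1, OneMemClass.coe_one]
    have := congrArg (constantCoeff (R := k)) h2
    rw [map_mul, map_one, ← coeff_zero_eq_constantCoeff_apply, hx, zero_mul] at this
    exact zero_ne_one this
  have h5m : t5 ∈ maximalIdeal R := hmemMax t5 (by rw [ht5]; simp [coeff_X_pow])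
  have h6m : t6 ∈ maximalIdeal R := hmemMax t6 (by rw [ht6]; simp [coeff_X_pow])
  have h9m : t9 ∈ maximalIdeal R := hmemMax t9 (by rw [ht9]; simp [coeff_X_pow])
  -- elements of the maximal ideal have zero constant term
  have hmaxCoeff : ∀ z : R, z ∈ maximalIdeal R → coeff 0 (z : PowerSeries k) = 0 := by
    intro z hz
    by_contra h0
    rw [mem_maximalIdeal, mem_nonunits_iff] at hz
    apply hz
    have h0' : constantCoeff (z : PowerSeries k) ≠ 0 := by
      rwa [← coeff_zero_eq_constantCoeff_apply]
    set u : kˣ := Units.mk0 _ h0' with hu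
    set g : PowerSeries k := invOfUnit (z : PowerSeries k) u with hg
    have hginv : ∀ n : ℕ, n ∉ AddSubmonoid.closure ({5, 6, 8, 9} : Set ℕ) →
        coeff n g = 0 := by
      intro n
      induction n using Nat.strong_induction_on with
      | _ n ih =>
        intro hn
        rw [hg, coeff_invOfUnit, if_neg (by rintro rfl; exact hn (zero_mem _))]
        rw [Finset.sum_eq_zero, mul_zero]
        rintro ⟨i, j⟩ hij
        rw [Finset.HasAntidiagonal.mem_antidiagonal] at hij
        split_ifs with hj
        · by_cases hi : i ∈ AddSubmonoid.closure ({5, 6, 8, 9} : Set ℕ)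
          · rw [ih j (by omega) (fun hjS => hn (hij ▸ add_mem hi hjS)), mul_zero]
          · rw [(hR _).1 z.2 i hi, zero_mul]
        · rfl
    have hgR : g ∈ R := (hR g).2 hginv
    refine IsUnit.of_mul_eq_one (a := z) ⟨g, hgR⟩ (Subtype.ext ?_)
    show (z : PowerSeries k) * g = 1
    exact mul_invOfUnit _ u rfl
  -- decomposition of maximal-ideal elements
  have hdecomp : ∀ z : R, coeff 0 (z : PowerSeries k) = 0 →
      ∃ a b c d : R, z = a * t5 + b * t6 + c * t8 + d * t9 := by
    intro z hz0
    set A : ℕ → PowerSeries k := fun g =>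
      PowerSeries.mk fun m => if sel (m + g) = g then coeff (m + g) (z : PowerSeries k)
        else 0 with hA
    have hAR : ∀ g : ℕ, 1 ≤ g → A g ∈ R := by
      intro g hg1
      rw [hR]
      intro n hn
      rw [hA]
      simp only [coeff_mk]
      split_ifs with hsel
      · by_cases hc : coeff (n + g) (z : PowerSeries k) = 0
        · exact hc
        · exfalso
          have hng : n + g ∈ AddSubmonoid.closure ({5, 6, 8, 9} : Set ℕ) := by
            by_contra hng
            exact hc ((hR _).1 z.2 _ hng)
          have := (sel_spec hng (by omega)).2
          rw [hsel, Nat.add_sub_cancel] at this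
          exact hn this
      · rfl
    have key : (z : PowerSeries k) = A 5 * X ^ 5 + A 6 * X ^ 6 + A 8 * X ^ 8 + A 9 * X ^ 9 := by
      ext n
      rw [map_add, map_add, map_add, coeff_mul_X_pow', coeff_mul_X_pow',
        coeff_mul_X_pow', coeff_mul_X_pow']
      simp only [hA, coeff_mk]
      have hT : ∀ g : ℕ, g ≤ n → (if sel (n - g + g) = g
            then coeff (n - g + g) (z : PowerSeries k) else 0) =
          (if sel n = g then coeff n (z : PowerSeries k) else 0) := by
        intro g hg
        rw [Nat.sub_add_cancel hg]
      by_cases hnS : n ∈ AddSubmonoid.closure ({5, 6, 8, 9} : Set ℕ)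
      · have hn' := (memS_iff n).1 hnS
        by_cases hn0 : n = 0
        · subst hn0
          rw [if_neg (by omega), if_neg (by omega), if_neg (by omega), if_neg (by omega), hz0]
          ring
        · have hsel5 : 5 ≤ n := by omega
          rcases (by unfold sel; split_ifs <;> omega :
              sel n = 5 ∨ sel n = 6 ∨ sel n = 8 ∨ sel n = 9) with hs | hs | hs | hs
          · have h6n : sel n ≠ 6 := by omega
            have h8n : sel n ≠ 8 := by omega
            have h9n : sel n ≠ 9 := by omega
            rw [if_pos hsel5, hT 5 hsel5, if_pos hs]
            by_cases h6 : 6 ≤ n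
            · rw [if_pos h6, hT 6 h6, if_neg h6n]
              by_cases h8 : 8 ≤ n
              · rw [if_pos h8, hT 8 h8, if_neg h8n]
                by_cases h9 : 9 ≤ n
                · rw [if_pos h9, hT 9 h9, if_neg h9n]; ring
                · rw [if_neg h9]; ring
              · rw [if_neg h8, if_neg (by omega)]; ring
            · rw [if_neg h6, if_neg (by omega), if_neg (by omega)]; ring
          · -- sel n = 6, so n = 6 or n = 12
            have hn6 : n = 6 ∨ n = 12 := by
              by_contra hc
              unfold sel at hs
              rw [if_neg (by omega)] at hs
              split_ifs at hs <;> omega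
            have h6le : 6 ≤ n := by omega
            rw [if_pos hsel5, hT 5 hsel5, if_neg (by omega), if_pos h6le, hT 6 h6le,
              if_pos hs]
            by_cases h8 : 8 ≤ n
            · rw [if_pos h8, hT 8 h8, if_neg (by omega)]
              by_cases h9 : 9 ≤ n
              · rw [if_pos h9, hT 9 h9, if_neg (by omega)]; ring
              · rw [if_neg h9]; ring
            · rw [if_neg h8, if_neg (by omega)]; ring
          · have hn8 : n = 8 := by
              unfold sel at hs
              split_ifs at hs <;> omega
            subst hn8
            rw [if_pos (by omega), hT 5 (by omega), if_neg (by omega), if_pos (by omega),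
              hT 6 (by omega), if_neg (by omega), if_pos (by omega), hT 8 (by omega),
              if_pos hs, if_neg (by omega)]
            ring
          · have hn9 : n = 9 := by
              unfold sel at hs
              split_ifs at hs <;> omega
            subst hn9
            rw [if_pos (by omega), hT 5 (by omega), if_neg (by omega), if_pos (by omega),
              hT 6 (by omega), if_neg (by omega), if_pos (by omega), hT 8 (by omega),
              if_neg (by omega), if_pos (by omega), hT 9 (by omega), if_pos hs]
            ring
      · have hz : coeff n (z : PowerSeries k) = 0 := (hR _).1 z.2 n hnS
        rw [hz]
        have hT0 : ∀ g : ℕ, (if g ≤ n then (if sel (n - g + g) = g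
              then coeff (n - g + g) (z : PowerSeries k) else 0) else 0) = 0 := by
          intro g
          split_ifs with h1 h2
          · rw [Nat.sub_add_cancel h1, hz]
          · rfl
          · rfl
        rw [hT0 5, hT0 6, hT0 8, hT0 9]
        ring
    refine ⟨⟨A 5, hAR 5 (by omega)⟩, ⟨A 6, hAR 6 (by omega)⟩, ⟨A 8, hAR 8 (by omega)⟩,
      ⟨A 9, hAR 9 (by omega)⟩, Subtype.ext ?_⟩
    push_cast
    exact key
  constructor
  · -- not integrally closed : t⁶ is integral over I
    intro hcl
    apply hnotI6
    apply hcl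
    refine ⟨3, by norm_num, fun i => if i = 3 then -(t5 * t5 * t8) else 0, ?_, ?_⟩
    · intro i h1 h3
      interval_cases i
      · beta_reduce; rw [if_neg (by omega)]; exact zero_mem _
      · beta_reduce; rw [if_neg (by omega)]; exact zero_mem _
      · beta_reduce; rw [if_pos rfl]
        refine neg_mem ?_
        have : I ^ 3 = I * I * I := by ring
        rw [this]
        exact Ideal.mul_mem_mul (Ideal.mul_mem_mul h5I h5I) h8I
    · rw [Finset.sum_eq_single_of_mem 3 (by decide)
        (fun b _ hne => by beta_reduce; rw [if_neg hne, zero_mul])]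
      beta_reduce
      rw [if_pos rfl]
      apply Subtype.ext
      push_cast
      ring
  · -- not weakly m-full : t¹² is in (mI : m) but not in I
    intro hco
    apply hnotI12
    rw [← hco, Submodule.mem_colon]
    intro p hp
    obtain ⟨a, b, c, d, hpeq⟩ := hdecomp p (hmaxCoeff p hp)
    rw [smul_eq_mul]
    have heq : t12 * p = a * (t9 * t8) + b * (t9 * t9) + c * (t5 * (t6 * t9)) +
        d * (t6 * (t6 * t9)) := by
      apply Subtype.ext
      rw [hpeq]
      push_cast
      ring
    rw [heq]
    have h69I : t6 * t9 ∈ I := Ideal.mul_mem_left I t6 h9I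
    exact add_mem (add_mem (add_mem
      (Ideal.mul_mem_left _ a (Ideal.mul_mem_mul h9m h8I))
      (Ideal.mul_mem_left _ b (Ideal.mul_mem_mul h9m h9I)))
      (Ideal.mul_mem_left _ c (Ideal.mul_mem_mul h5m h69I)))
      (Ideal.mul_mem_left _ d (Ideal.mul_mem_mul h6m h69I))
end

section
/- Let S = k[[t,u]] be a power series ring over a field k and R = k[[t^3, t^4, t^5, u]]. Then the ideal I = (t^3, t^4) of R satisfies (mI : u) = I (so I is m-full) but I is not integrally closed, where m is the maximal ideal of R. -/
/-!
The element `t⁵` is integral over `I` since `(t⁵)² = t⁴ (t³)² ∈ I²`, but `t⁵ ∉ I` because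
neither `t²` nor `t` lies in `R`. Since `u ∈ m`, clearly `I ⊆ (mI : u)`. Conversely, if
`r u = a t³ + b t⁴` with `a, b ∈ R`, dividing `a` and `b` by `u` after discarding their `u`-free
terms gives `a', b'` with `r = a' t³ + b' t⁴`; they stay in `R` because membership in `R` only
constrains the exponents of `t`.
-/

open IsLocalRing MvPowerSeries

theorem Nat.eq_zero_or_le_of_mem_closure {S : Set ℕ} {m n : ℕ} (hS : ∀ s ∈ S, m ≤ s)
    (hn : n ∈ AddSubmonoid.closure S) : n = 0 ∨ m ≤ n := by
  induction hn using AddSubmonoid.closure_induction with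
  | mem s hs => exact .inr (hS s hs)
  | zero => exact .inl rfl
  | add x y _ _ hx hy => omega

theorem Ideal.colon_mul_span_singleton_eq {A : Type*} [CommRing A] {I J : Ideal A} {x : A}
    (hx : x ∈ J) (hI : ∀ r, r * x ∈ I → r ∈ I) : (J * I).colon (Ideal.span {x}) = I := by
  ext r
  rw [Ideal.mem_colon_span_singleton]
  refine ⟨fun h => hI r (Ideal.mul_le_right h), fun h => ?_⟩
  rw [mul_comm r x]
  exact Ideal.mul_mem_mul hx h

theorem intClosedIdeal.mem_of_sq_mem_sq {A : Type*} [CommRing A] {I : Ideal A}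
    (hI : intClosedIdeal I) {x : A} (hx : x ^ 2 ∈ I ^ 2) : x ∈ I := by
  refine hI x ⟨2, two_pos, fun i => if i = 2 then -x ^ 2 else 0, fun i _ _ => ?_, ?_⟩
  · dsimp only
    split_ifs with h
    · subst h
      exact neg_mem hx
    · exact zero_mem _
  · simp

namespace MvPowerSeries

variable {σ k : Type*} [CommRing k]

theorem coeff_mul_X_pow' (f : MvPowerSeries σ k) (i : σ) (n : ℕ) (d : σ →₀ ℕ) :
    coeff d (f * X i ^ n) = if n ≤ d i then coeff (d - Finsupp.single i n) f else 0 := by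
  rw [X_pow_eq, coeff_mul_monomial, mul_one]
  simp only [Finsupp.single_le_iff]

noncomputable def divX (j : σ) (f : MvPowerSeries σ k) : MvPowerSeries σ k :=
  fun d => coeff (d + Finsupp.single j 1) f

theorem coeff_divX (j : σ) (f : MvPowerSeries σ k) (d : σ →₀ ℕ) :
    coeff d (divX j f) = coeff (d + Finsupp.single j 1) f :=
  rfl

theorem divX_add (j : σ) (f g : MvPowerSeries σ k) : divX j (f + g) = divX j f + divX j g := by
  ext d
  simp only [coeff_divX, map_add]

theorem divX_mul_X (j : σ) (f : MvPowerSeries σ k) : divX j (f * X j) = f := by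
  ext d
  rw [coeff_divX, X_def, coeff_add_mul_monomial, mul_one]

theorem divX_mul_X_pow_of_ne {i j : σ} (hij : i ≠ j) (f : MvPowerSeries σ k) (n : ℕ) :
    divX j (f * X i ^ n) = divX j f * X i ^ n := by
  ext d
  rw [coeff_divX, coeff_mul_X_pow', coeff_mul_X_pow', coeff_divX, Finsupp.add_apply,
    Finsupp.single_eq_of_ne hij, add_zero]
  split_ifs with h
  · rw [tsub_add_eq_add_tsub (Finsupp.single_le_iff.mpr h)]
  · rfl

theorem mem_maximalIdeal_of_constantCoeff_eq_zero [Nontrivial k]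
    {R : Subalgebra k (MvPowerSeries σ k)} [IsLocalRing R] {x : R}
    (hx : constantCoeff (x : MvPowerSeries σ k) = 0) : x ∈ maximalIdeal R := fun hunit =>
  not_isUnit_zero (M₀ := k) <| by
    simpa [hx] using hunit.map ((constantCoeff : MvPowerSeries σ k →+* k).comp R.val)

/-- `R = k[[X i ^ g : g ∈ G]][[X j : j ≠ i]]`. -/
def IsSemigroupSubalgebra (R : Subalgebra k (MvPowerSeries σ k)) (i : σ) (G : AddSubmonoid ℕ) :
    Prop :=
  ∀ f, f ∈ R ↔ ∀ d : σ →₀ ℕ, d i ∉ G → coeff d f = 0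

namespace IsSemigroupSubalgebra

variable {R : Subalgebra k (MvPowerSeries σ k)} {i : σ} {G : AddSubmonoid ℕ}

theorem X_pow_mem (hR : IsSemigroupSubalgebra R i G) {n : ℕ} (hn : n ∈ G) :
    (X i ^ n : MvPowerSeries σ k) ∈ R := by
  classical
  refine (hR _).mpr fun d hd => ?_
  rw [coeff_X_pow, if_neg]
  rintro rfl
  exact hd (by simpa using hn)

theorem X_mem (hR : IsSemigroupSubalgebra R i G) {j : σ} (hji : j ≠ i) :
    (X j : MvPowerSeries σ k) ∈ R := by
  classical
  refine (hR _).mpr fun d hd => ?_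
  rw [coeff_X, if_neg]
  rintro rfl
  exact hd (by simp [Finsupp.single_eq_of_ne hji.symm])

theorem divX_mem (hR : IsSemigroupSubalgebra R i G) {j : σ} (hji : j ≠ i)
    {f : MvPowerSeries σ k} (hf : f ∈ R) : divX j f ∈ R :=
  (hR _).mpr fun d hd => (hR f).mp hf _ (by simpa [Finsupp.single_eq_of_ne hji.symm] using hd)

theorem coeff_single_mul_X_pow_eq_zero (hR : IsSemigroupSubalgebra R i G)
    {f : MvPowerSeries σ k} (hf : f ∈ R) {l m : ℕ} (hlm : l - m ∉ G) :
    coeff (Finsupp.single i l) (f * X i ^ m) = 0 := by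
  rw [coeff_mul_X_pow']
  split_ifs
  · exact (hR f).mp hf _ (by simpa using hlm)
  · rfl

theorem mem_span_pair_of_mul_X_mem (hR : IsSemigroupSubalgebra R i G) {j : σ} (hji : j ≠ i)
    {m n : ℕ} {p q x r : R} (hp : (p : MvPowerSeries σ k) = X i ^ m)
    (hq : (q : MvPowerSeries σ k) = X i ^ n) (hx : (x : MvPowerSeries σ k) = X j)
    (hr : r * x ∈ Ideal.span {p, q}) : r ∈ Ideal.span {p, q} := by
  obtain ⟨a, b, hab⟩ := Ideal.mem_span_pair.mp hr
  have hab' : (a : MvPowerSeries σ k) * X i ^ m + (b : MvPowerSeries σ k) * X i ^ n =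
      (r : MvPowerSeries σ k) * X j := by
    simpa [hp, hq, hx] using congrArg Subtype.val hab
  have hr' : (r : MvPowerSeries σ k) = divX j a * X i ^ m + divX j b * X i ^ n := by
    rw [← divX_mul_X j (r : MvPowerSeries σ k), ← hab', divX_add,
      divX_mul_X_pow_of_ne hji.symm, divX_mul_X_pow_of_ne hji.symm]
  refine Ideal.mem_span_pair.mpr
    ⟨⟨divX j a, hR.divX_mem hji a.2⟩, ⟨divX j b, hR.divX_mem hji b.2⟩, Subtype.ext ?_⟩
  simp [hp, hq, hr']

theorem notMem_span_pair (hR : IsSemigroupSubalgebra R i G) [Nontrivial k] {l m n : ℕ}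
    {p q x : R} (hp : (p : MvPowerSeries σ k) = X i ^ m) (hq : (q : MvPowerSeries σ k) = X i ^ n)
    (hx : (x : MvPowerSeries σ k) = X i ^ l) (hlm : l - m ∉ G) (hln : l - n ∉ G) :
    x ∉ Ideal.span {p, q} := by
  classical
  rintro hmem
  obtain ⟨a, b, hab⟩ := Ideal.mem_span_pair.mp hmem
  have := congrArg (fun y : R => coeff (Finsupp.single i l) (y : MvPowerSeries σ k)) hab
  simp only [Subalgebra.coe_add, Subalgebra.coe_mul, hp, hq, hx, map_add,
    hR.coeff_single_mul_X_pow_eq_zero a.2 hlm, hR.coeff_single_mul_X_pow_eq_zero b.2 hln,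
    coeff_X_pow, if_true, add_zero] at this
  exact zero_ne_one this

end IsSemigroupSubalgebra

end MvPowerSeries

/-- Let `k` be a field, `S = k[[t, u]]` and `R = k[[t³, t⁴, t⁵, u]] ⊆ S` (power series
all of whose monomials `tⁱuʲ` have `i` in the semigroup generated by `3, 4, 5`). Then the
ideal `I = (t³, t⁴)` of `R` satisfies `(mI : u) = I` (so `I` is `m`-full), but `I` is not
integrally closed, where `m` is the maximal ideal of `R`. -/
theorem stmt16 (k : Type*) [Field k]
    (R : Subalgebra k (MvPowerSeries (Fin 2) k))
    (hR : ∀ f : MvPowerSeries (Fin 2) k, f ∈ R ↔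
      ∀ d : Fin 2 →₀ ℕ, (d 0) ∉ AddSubmonoid.closure ({3, 4, 5} : Set ℕ) →
        MvPowerSeries.coeff d f = 0)
    [IsLocalRing R]
    (I : Ideal R)
    (hI : I = Ideal.span {x : R | (x : MvPowerSeries (Fin 2) k) = X 0 ^ 3 ∨
      (x : MvPowerSeries (Fin 2) k) = X 0 ^ 4}) :
    Submodule.colon (maximalIdeal R * I)
        (Ideal.span {x : R | (x : MvPowerSeries (Fin 2) k) = X 1}) = I ∧
      ¬ intClosedIdeal I := by
  set G := AddSubmonoid.closure ({3, 4, 5} : Set ℕ)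
  have hR' : IsSemigroupSubalgebra R 0 G := hR
  have hG : ∀ n ∈ G, n = 0 ∨ 3 ≤ n := fun n => Nat.eq_zero_or_le_of_mem_closure (by simp)
  have hG1 : 1 ∉ G := fun h => by have := hG 1 h; omega
  have hG2 : 2 ∉ G := fun h => by have := hG 2 h; omega
  let t (n : ℕ) : n ∈ G → R := fun hn => ⟨X 0 ^ n, hR'.X_pow_mem hn⟩
  have h3 : 3 ∈ G := AddSubmonoid.subset_closure (by simp)
  have h4 : 4 ∈ G := AddSubmonoid.subset_closure (by simp)
  have h5 : 5 ∈ G := AddSubmonoid.subset_closure (by simp)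
  let u : R := ⟨X 1, hR'.X_mem (by decide)⟩
  have hI' : I = Ideal.span {t 3 h3, t 4 h4} := by
    rw [hI]
    congr 1
    ext x
    simp [t, Subtype.ext_iff]
  have hu : Ideal.span {x : R | (x : MvPowerSeries (Fin 2) k) = X 1} = Ideal.span {u} := by
    congr 1
    ext x
    simp [u, Subtype.ext_iff]
  refine ⟨?_, fun hIC => ?_⟩
  · rw [hu]
    refine Ideal.colon_mul_span_singleton_eq (mem_maximalIdeal_of_constantCoeff_eq_zero
      (constantCoeff_X 1)) fun r hr => ?_
    rw [hI'] at hr ⊢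
    exact hR'.mem_span_pair_of_mul_X_mem (by decide) rfl rfl rfl hr
  · have ht3 : t 3 h3 ∈ I := hI' ▸ Ideal.subset_span (by simp)
    have ht5_sq : t 5 h5 ^ 2 = t 4 h4 * t 3 h3 ^ 2 := Subtype.ext (by
      show (X 0 ^ 5 : MvPowerSeries (Fin 2) k) ^ 2 = X 0 ^ 4 * (X 0 ^ 3) ^ 2
      ring)
    have ht5 : t 5 h5 ∈ I :=
      hIC.mem_of_sq_mem_sq (ht5_sq ▸ Ideal.mul_mem_left _ _ (Ideal.pow_mem_pow ht3 2))
    rw [hI'] at ht5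
    exact hR'.notMem_span_pair rfl rfl rfl (by simpa using hG2) (by simpa using hG1) ht5
end
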